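/- Let H be a real inner product space and let 1 < p ≤ 2. For all x, y ∈ H with x ≠ y one has ⟨F_p(x) − F_p(y), x − y⟩ > 0; that is, the map F_p is strictly monotone on H. -/

import Mathlib

/-!
If `‖x‖ = ‖y‖ = r`, then `F_p x - F_p y = r^(p-2) • (x - y)` and the pairing is
`r^(p-2) ‖x - y‖² > 0`. Otherwise Cauchy–Schwarz bounds the pairing below by `(‖x‖^(p-1) - ‖y‖^(p-1)) (‖x‖ - ‖y‖)`, which is
positive because `t ↦ t^(p-1)` is strictly increasing on `[0, ∞)`.
-/

open Real
open scoped RealInnerProductSpace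

/-- The p-Laplacian-type map `F_p : H → H`, `F_p x = ‖x‖^(p-2) • x` for `x ≠ 0`,
`F_p 0 = 0`. -/
noncomputable def Fp {H : Type*} [NormedAddCommGroup H] [NormedSpace ℝ H] (p : ℝ) (x : H) : H :=
  open scoped Classical in
  if x = 0 then 0 else ‖x‖ ^ (p - 2) • x

theorem Fp_eq_rpow_smul {H : Type*} [NormedAddCommGroup H] [NormedSpace ℝ H] (p : ℝ) (x : H) :
    Fp p x = ‖x‖ ^ (p - 2) • x := by
  rcases eq_or_ne x 0 with rfl | hx
  · simp [Fp]
  · simp [Fp, hx]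

theorem Real.rpow_sub_two_mul_self {a p : ℝ} (ha : 0 ≤ a) (hp : p ≠ 1) :
    a ^ (p - 2) * a = a ^ (p - 1) := by
  rw [← rpow_add_one' ha (by contrapose! hp; linarith)]
  ring_nf

theorem Real.rpow_sub_rpow_mul_sub_pos {a b q : ℝ} (ha : 0 ≤ a) (hb : 0 ≤ b) (hab : a ≠ b)
    (hq : 0 < q) : 0 < (a ^ q - b ^ q) * (a - b) := by
  rcases hab.lt_or_gt with h | h
  · exact mul_pos_of_neg_of_neg (sub_neg.2 (rpow_lt_rpow ha h hq)) (sub_neg.2 h)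
  · exact mul_pos (sub_pos.2 (rpow_lt_rpow hb h hq)) (sub_pos.2 h)

theorem norm_mul_sub_le_real_inner_smul_sub_smul {H : Type*} [NormedAddCommGroup H]
    [InnerProductSpace ℝ H] {α β : ℝ} (hα : 0 ≤ α) (hβ : 0 ≤ β) (x y : H) :
    (α * ‖x‖ - β * ‖y‖) * (‖x‖ - ‖y‖) ≤ ⟪α • x - β • y, x - y⟫ := by
  have hxy : ⟪y, x⟫ ≤ ‖x‖ * ‖y‖ := (real_inner_le_norm y x).trans_eq (mul_comm _ _)
  rw [inner_sub_left, inner_sub_right, inner_sub_right, real_inner_smul_left,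
    real_inner_smul_left, real_inner_smul_left, real_inner_smul_left,
    real_inner_self_eq_norm_sq, real_inner_self_eq_norm_sq, real_inner_comm y x]
  nlinarith [mul_le_mul_of_nonneg_left hxy (add_nonneg hα hβ)]

theorem Fp_strictMonotone_general {H : Type*} [NormedAddCommGroup H] [InnerProductSpace ℝ H]
    (p : ℝ) (hp1 : 1 < p) (x y : H) (hxy : x ≠ y) :
    0 < ⟪Fp p x - Fp p y, x - y⟫ := by
  rw [Fp_eq_rpow_smul, Fp_eq_rpow_smul]
  rcases eq_or_ne ‖x‖ ‖y‖ with hnorm | hnorm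
  · have hy : 0 < ‖y‖ := by
      refine norm_pos_iff.2 fun hy ↦ hxy ?_
      rw [hy, ← norm_eq_zero, hnorm, hy, norm_zero]
    rw [hnorm, ← smul_sub, real_inner_smul_left, real_inner_self_eq_norm_sq]
    exact mul_pos (rpow_pos_of_pos hy _) (pow_pos (norm_pos_iff.2 (sub_ne_zero.2 hxy)) 2)
  · calc 0 < (‖x‖ ^ (p - 1) - ‖y‖ ^ (p - 1)) * (‖x‖ - ‖y‖) :=
          rpow_sub_rpow_mul_sub_pos (norm_nonneg x) (norm_nonneg y) hnorm (by linarith)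
      _ = (‖x‖ ^ (p - 2) * ‖x‖ - ‖y‖ ^ (p - 2) * ‖y‖) * (‖x‖ - ‖y‖) := by
          rw [rpow_sub_two_mul_self (norm_nonneg x) hp1.ne',
            rpow_sub_two_mul_self (norm_nonneg y) hp1.ne']
      _ ≤ _ := norm_mul_sub_le_real_inner_smul_sub_smul
          (rpow_nonneg (norm_nonneg x) _) (rpow_nonneg (norm_nonneg y) _) x y

/-- For a real inner product space `H` and `1 < p ≤ 2`, for all `x ≠ y` in `H` one has
`⟨F_p x − F_p y, x − y⟩ > 0`: the map `F_p` is strictly monotone on `H`. -/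
theorem Fp_strictMonotone {H : Type*} [NormedAddCommGroup H] [InnerProductSpace ℝ H]
    (p : ℝ) (hp1 : 1 < p) (hp2 : p ≤ 2) (x y : H) (hxy : x ≠ y) :
    0 < ⟪Fp p x - Fp p y, x - y⟫ :=
  Fp_strictMonotone_general p hp1 x y hxy
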